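/- arXiv:math/0001034 — 2 statements merged into one kernel-verified Lean document; each statement's English description precedes it below -/
import Mathlib

section
/- Gauge equivalence of the six-vertex and eight-vertex deformed double Yangian R-matrices: with K = V⊗V where V = (1/√2)[[1,1],[−1,1]], one has R_{V8}(β,r) = K · R_{V6}(β,r) · K⁻¹ (up to the common normalization factor), where R_{V6} = M(b⁺,b⁻) with b± as above and R_{V8} is the 8-vertex matrix with entries built from sin and cos of iβ/(2r) and π/(2r). -/
set_option autoImplicit false
open scoped Real

open Matrix Complex Kronecker

noncomputable def M (a b : ℂ) : Matrix (Fin 4) (Fin 4) ℂ :=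
  !![1, 0, 0, 0;
     0, (a + b)/2, (a - b)/2, 0;
     0, (a - b)/2, (a + b)/2, 0;
     0, 0, 0, 1]

noncomputable def V : Matrix (Fin 2) (Fin 2) ℂ :=
  (1 / Real.sqrt 2 : ℝ) • !![1, 1; -1, 1]

/-- The gauge matrix K = V ⊗ V, reindexed as a 4×4 matrix. -/
noncomputable def K : Matrix (Fin 4) (Fin 4) ℂ :=
  Matrix.reindex finProdFinEquiv finProdFinEquiv (V ⊗ₖ V)

noncomputable def RV6 (β r : ℂ) : Matrix (Fin 4) (Fin 4) ℂ :=
  M (Complex.cos ((I * β - π) / (2 * r)) / Complex.cos ((I * β + π) / (2 * r)))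
    (Complex.sin ((I * β - π) / (2 * r)) / Complex.sin ((I * β + π) / (2 * r)))

noncomputable def RV8 (β r : ℂ) : Matrix (Fin 4) (Fin 4) ℂ :=
  !![Complex.cos (I * β / (2 * r)) * Complex.cos (π / (2 * r)) / Complex.cos ((π + I * β) / (2 * r)),
       0, 0,
     -(Complex.sin (I * β / (2 * r)) * Complex.sin (π / (2 * r)) / Complex.cos ((π + I * β) / (2 * r)));
     0,
     Complex.sin (I * β / (2 * r)) * Complex.cos (π / (2 * r)) / Complex.sin ((π + I * β) / (2 * r)),
     Complex.cos (I * β / (2 * r)) * Complex.sin (π / (2 * r)) / Complex.sin ((π + I * β) / (2 * r)),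
     0;
     0,
     Complex.cos (I * β / (2 * r)) * Complex.sin (π / (2 * r)) / Complex.sin ((π + I * β) / (2 * r)),
     Complex.sin (I * β / (2 * r)) * Complex.cos (π / (2 * r)) / Complex.sin ((π + I * β) / (2 * r)),
     0;
     -(Complex.sin (I * β / (2 * r)) * Complex.sin (π / (2 * r)) / Complex.cos ((π + I * β) / (2 * r))),
       0, 0,
     Complex.cos (I * β / (2 * r)) * Complex.cos (π / (2 * r)) / Complex.cos ((π + I * β) / (2 * r))]

/-! ### Auxiliary lemmas -/

noncomputable def K0 : Matrix (Fin 4) (Fin 4) ℂ :=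
  !![1,1,1,1; -1,1,-1,1; -1,-1,1,1; 1,-1,-1,1]

lemma g00 : finProdFinEquiv ((0:Fin 2),(0:Fin 2)) = (0 : Fin 4) := by decide
lemma g01 : finProdFinEquiv ((0:Fin 2),(1:Fin 2)) = (1 : Fin 4) := by decide
lemma g10 : finProdFinEquiv ((1:Fin 2),(0:Fin 2)) = (2 : Fin 4) := by decide
lemma g11 : finProdFinEquiv ((1:Fin 2),(1:Fin 2)) = (3 : Fin 4) := by decide

lemma hK : K = (1/2 : ℂ) • K0 := by
  have h2 : ((Real.sqrt 2 : ℝ) : ℂ)⁻¹ * ((Real.sqrt 2 : ℝ) : ℂ)⁻¹ = 2⁻¹ := by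
    rw [← mul_inv, ← Complex.ofReal_mul, Real.mul_self_sqrt (by norm_num)]
    norm_num
  ext i j
  obtain ⟨⟨i1,i2⟩, rfl⟩ := (finProdFinEquiv (m := 2) (n := 2)).surjective i
  obtain ⟨⟨j1,j2⟩, rfl⟩ := (finProdFinEquiv (m := 2) (n := 2)).surjective j
  rw [K, Matrix.reindex_apply, Matrix.submatrix_apply, Equiv.symm_apply_apply,
    Equiv.symm_apply_apply]
  fin_cases i1 <;> fin_cases i2 <;> fin_cases j1 <;> fin_cases j2 <;>
    simp only [Fin.mk_zero, Fin.mk_one, Fin.isValue, g00, g01, g10, g11] <;>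
    simp [K0, V, kroneckerMap_apply, Matrix.smul_apply, Matrix.cons_val_two,
      Matrix.cons_val_three, Matrix.tail_cons, Matrix.head_cons, Matrix.vecHead,
      Matrix.vecTail, Function.comp] <;>
    linear_combination (norm := ring_nf) h2

lemma hKKt : K * Kᵀ = 1 := by
  rw [hK]
  ext i j
  fin_cases i <;> fin_cases j <;>
    simp [K0, Matrix.mul_apply, Fin.sum_univ_four, Matrix.one_apply, Matrix.transpose_apply,
      Matrix.smul_apply, Matrix.cons_val_two, Matrix.cons_val_three, Matrix.tail_cons,
      Matrix.head_cons, Matrix.vecHead, Matrix.vecTail, Function.comp] <;> ring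

lemma hKinv : K⁻¹ = Kᵀ := by
  exact Matrix.inv_eq_right_inv hKKt

set_option maxHeartbeats 2000000 in
lemma conjM (a b : ℂ) :
    K * M a b * Kᵀ =
      !![(1+a)/2, 0, 0, (1-a)/2;
         0, (1+b)/2, (1-b)/2, 0;
         0, (1-b)/2, (1+b)/2, 0;
         (1-a)/2, 0, 0, (1+a)/2] := by
  rw [hK]
  ext i j
  fin_cases i <;> fin_cases j <;>
    simp [K0, M, Matrix.mul_apply, Fin.sum_univ_four, Matrix.transpose_apply,
      Matrix.smul_apply, Matrix.cons_val_two, Matrix.cons_val_three, Matrix.tail_cons,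
      Matrix.head_cons, Matrix.vecHead, Matrix.vecTail, Function.comp] <;> ring

lemma cc (x y : ℂ) (h : Complex.cos (x+y) ≠ 0) :
    Complex.cos x * Complex.cos y / Complex.cos (x+y)
      = (1 + Complex.cos (x-y)/Complex.cos (x+y))/2 := by
  field_simp
  rw [Complex.cos_add, Complex.cos_sub]; ring

lemma ss (x y : ℂ) (h : Complex.cos (x+y) ≠ 0) :
    -(Complex.sin x * Complex.sin y / Complex.cos (x+y))
      = (1 - Complex.cos (x-y)/Complex.cos (x+y))/2 := by
  field_simp
  rw [Complex.cos_add, Complex.cos_sub]; ring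

lemma sc (x y : ℂ) (h : Complex.sin (x+y) ≠ 0) :
    Complex.sin x * Complex.cos y / Complex.sin (x+y)
      = (1 + Complex.sin (x-y)/Complex.sin (x+y))/2 := by
  field_simp
  rw [Complex.sin_add, Complex.sin_sub]; ring

lemma cs (x y : ℂ) (h : Complex.sin (x+y) ≠ 0) :
    Complex.cos x * Complex.sin y / Complex.sin (x+y)
      = (1 - Complex.sin (x-y)/Complex.sin (x+y))/2 := by
  field_simp
  rw [Complex.sin_add, Complex.sin_sub]; ring

theorem gauge_V6_V8 (β r : ℂ)
    (hc : Complex.cos ((π + I * β) / (2 * r)) ≠ 0)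
    (hs : Complex.sin ((π + I * β) / (2 * r)) ≠ 0) :
    RV8 β r = K * RV6 β r * K⁻¹ := by
  rw [hKinv, RV6, conjM]
  have hsum : (π + I * β) / (2 * r) = I * β / (2 * r) + (π : ℂ) / (2 * r) := by
    rw [← add_div]; ring_nf
  have hsub : (I * β - π) / (2 * r) = I * β / (2 * r) - (π : ℂ) / (2 * r) := by
    rw [← sub_div]
  have hadd : (I * β + π) / (2 * r) = (π + I * β) / (2 * r) := by ring_nf
  rw [hsum] at hc hs
  ext i j
  fin_cases i <;> fin_cases j <;>
    simp [RV8, hsum, hsub, hadd, Matrix.cons_val_two, Matrix.cons_val_three,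
      Matrix.tail_cons, Matrix.head_cons, Matrix.vecHead, Matrix.vecTail,
      cc _ _ hc, ss _ _ hc, sc _ _ hs, cs _ _ hs]
end

section
/- The double Yangian R-matrix R(β) = M(1,(iβ−π)/(iβ+π)) satisfies the Yang–Baxter equation R₁₂(β₁−β₂)R₁₃(β₁−β₃)R₂₃(β₂−β₃) = R₂₃(β₂−β₃)R₁₃(β₁−β₃)R₁₂(β₁−β₂) whenever the arguments avoid the poles iβ = −π. -/
set_option autoImplicit false
open scoped Real

open Matrix Complex

noncomputable def M2 (a b : ℂ) : Matrix (Fin 2 × Fin 2) (Fin 2 × Fin 2) ℂ :=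
  Matrix.of fun p q => M a b (finProdFinEquiv p) (finProdFinEquiv q)

noncomputable def emb12 (A : Matrix (Fin 2 × Fin 2) (Fin 2 × Fin 2) ℂ) :
    Matrix (Fin 2 × Fin 2 × Fin 2) (Fin 2 × Fin 2 × Fin 2) ℂ :=
  Matrix.of fun x y => A (x.1, x.2.1) (y.1, y.2.1) * (if x.2.2 = y.2.2 then 1 else 0)

noncomputable def emb13 (A : Matrix (Fin 2 × Fin 2) (Fin 2 × Fin 2) ℂ) :
    Matrix (Fin 2 × Fin 2 × Fin 2) (Fin 2 × Fin 2 × Fin 2) ℂ :=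
  Matrix.of fun x y => A (x.1, x.2.2) (y.1, y.2.2) * (if x.2.1 = y.2.1 then 1 else 0)

noncomputable def emb23 (A : Matrix (Fin 2 × Fin 2) (Fin 2 × Fin 2) ℂ) :
    Matrix (Fin 2 × Fin 2 × Fin 2) (Fin 2 × Fin 2 × Fin 2) ℂ :=
  Matrix.of fun x y => (if x.1 = y.1 then 1 else 0) * A (x.2.1, x.2.2) (y.2.1, y.2.2)

/-- The rational double Yangian R-matrix (unnormalised). -/
noncomputable def RDY (β : ℂ) : Matrix (Fin 2 × Fin 2) (Fin 2 × Fin 2) ℂ :=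
  M2 1 ((I * β - π) / (I * β + π))

/-! ### Auxiliary definitions -/

noncomputable def swapM : Matrix (Fin 2 × Fin 2) (Fin 2 × Fin 2) ℂ :=
  Matrix.of fun p q => if p.1 = q.2 ∧ p.2 = q.1 then 1 else 0

noncomputable def N (x : ℂ) : Matrix (Fin 2 × Fin 2) (Fin 2 × Fin 2) ℂ :=
  x • (1 : Matrix (Fin 2 × Fin 2) (Fin 2 × Fin 2) ℂ) + (π : ℂ) • swapM

lemma RDY_eq (u : ℂ) (hu : I * u + π ≠ 0) : RDY u = (I * u + π)⁻¹ • N (I * u) := by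
  ext ⟨i, j⟩ ⟨k, l⟩
  fin_cases i <;> fin_cases j <;> fin_cases k <;> fin_cases l <;>
    · simp [RDY, M2, M, N, swapM, Matrix.one_apply, finProdFinEquiv, Matrix.smul_apply,
        Prod.ext_iff, vecHead, vecTail]
      try field_simp
      try ring

lemma emb12_smul (c : ℂ) (A : Matrix (Fin 2 × Fin 2) (Fin 2 × Fin 2) ℂ) :
    emb12 (c • A) = c • emb12 A := by
  ext x y; simp [emb12, mul_assoc]

lemma emb13_smul (c : ℂ) (A : Matrix (Fin 2 × Fin 2) (Fin 2 × Fin 2) ℂ) :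
    emb13 (c • A) = c • emb13 A := by
  ext x y; simp [emb13, mul_assoc]

lemma emb23_smul (c : ℂ) (A : Matrix (Fin 2 × Fin 2) (Fin 2 × Fin 2) ℂ) :
    emb23 (c • A) = c • emb23 A := by
  ext x y; simp [emb23]

set_option maxHeartbeats 2000000 in
lemma key (x y : ℂ) :
    emb12 (N x) * emb13 (N (x + y)) * emb23 (N y) =
      emb23 (N y) * emb13 (N (x + y)) * emb12 (N x) := by
  ext ⟨i, j, k⟩ ⟨i', j', k'⟩
  simp only [Matrix.mul_apply, Fintype.sum_prod_type, Fin.sum_univ_two,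
    emb12, emb13, emb23, N, swapM, Matrix.one_apply, Matrix.smul_apply, Matrix.add_apply,
    Matrix.of_apply, Prod.mk.injEq, smul_eq_mul]
  fin_cases i <;> fin_cases j <;> fin_cases k <;> fin_cases i' <;> fin_cases j' <;> fin_cases k' <;>
    simp <;> ring

theorem RDY_YBE (β₁ β₂ β₃ : ℂ)
    (h : ∀ β ∈ ({β₁ - β₂, β₁ - β₃, β₂ - β₃} : Set ℂ), I * β + π ≠ 0) :
    emb12 (RDY (β₁ - β₂)) * emb13 (RDY (β₁ - β₃)) * emb23 (RDY (β₂ - β₃)) =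
      emb23 (RDY (β₂ - β₃)) * emb13 (RDY (β₁ - β₃)) * emb12 (RDY (β₁ - β₂)) := by
  have h12 := h (β₁ - β₂) (by simp)
  have h13 := h (β₁ - β₃) (by simp)
  have h23 := h (β₂ - β₃) (by simp)
  rw [RDY_eq _ h12, RDY_eq _ h13, RDY_eq _ h23,
    show I * (β₁ - β₃) = I * (β₁ - β₂) + I * (β₂ - β₃) from by ring]
  simp only [emb12_smul, emb13_smul, emb23_smul, Matrix.smul_mul, Matrix.mul_smul, smul_smul]
  rw [key]
  congr 1
  ring
end
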